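/- arXiv:2405.19245 — 2 statements merged into one kernel-verified Lean document; each statement's English description precedes it below -/
import Mathlib

section
/- Let ℋ be a symmetric d×d real matrix with ‖ℋ‖ ≤ ℓ, eigenvalues λ_j and an orthonormal eigenbasis; let 𝒮^c be the set of indices j with λ_j ∈ [−ℓ, θ²/(η(2−θ)²)]. Assume 0 < θ ≤ 1/4, η = 1/(4ℓ), and let 𝒯 = √κ·χ·c with κ = ℓ/√(ϱε) and constants χ, c ≥ 1. For each j, set x = ηλ_j, let A_j be the 2×2 matrix [[(2−θ)(1−x), −(1−θ)(1−x)], [1, 0]], define a_τ^{(j)} = (1 0)·A_j^τ·(1 0)ᵀ and p_τ^{(j)} = a_{𝒯−1−τ}^{(j)} / ∑_{τ'=0}^{𝒯−1} a_{τ'}^{(j)}. If the vectors e_0, ..., e_{𝒯−1} ∈ ℝ^d satisfy max_τ ‖e_τ‖ < ε/(χ·c·√(2𝒯)), then ∑_{j ∈ 𝒮^c} |∑_{τ=0}^{𝒯−1} p_τ^{(j)} e_τ^{(j)}|² ≤ ε², where e_τ^{(j)} denotes the component of e_τ along the j-th eigenvector of ℋ. -/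
open scoped RealInnerProductSpace Classical

/-- The 2×2 transition matrix of the AGD recursion in the eigendirection with `x = ηλ`:
`A = [[(2−θ)(1−x), −(1−θ)(1−x)], [1, 0]]`. -/
def agdMat (θ x : ℝ) : Matrix (Fin 2) (Fin 2) ℝ :=
  !![(2 - θ) * (1 - x), -((1 - θ) * (1 - x)); 1, 0]

/-!
In a direction `j ∈ 𝒮ᶜ` the characteristic polynomial `μ² − sμ + p` of `A_j`, with
`s = (2−θ)(1−x)` and `p = (1−θ)(1−x)`, has nonnegative discriminant `s² − 4p = (1−x)(θ² − x(2−θ)²)`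
and `s > 0`, so `a_{τ+1} ≥ (s/2)·a_τ > 0` for all `τ`. Hence `p^{(j)}` is a probability vector and
Cauchy–Schwarz gives `|∑_τ p_τ^{(j)} e_τ^{(j)}|² ≤ ∑_τ (e_τ^{(j)})²`. Summing over `j` and using
Parseval, the total is at most `∑_{τ<𝒯} ‖e_τ‖² ≤ 𝒯 · ε²/(2χ²c²𝒯) ≤ ε²`.
-/

open Finset

lemma agdMat_pow_succ_succ_apply_zero_zero (θ x : ℝ) (n : ℕ) :
    (agdMat θ x ^ (n + 2)) 0 0 =
      (2 - θ) * (1 - x) * (agdMat θ x ^ (n + 1)) 0 0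
        - (1 - θ) * (1 - x) * (agdMat θ x ^ n) 0 0 := by
  have hrow : ∀ M : Matrix (Fin 2) (Fin 2) ℝ,
      (agdMat θ x * M) 0 0 = (2 - θ) * (1 - x) * M 0 0 - (1 - θ) * (1 - x) * M 1 0 ∧
        (agdMat θ x * M) 1 0 = M 0 0 := fun M ↦ by
    simp only [agdMat, Matrix.mul_apply, Matrix.of_apply, Matrix.cons_val', Matrix.cons_val_fin_one,
      Matrix.cons_val_zero, Fin.sum_univ_two, Matrix.cons_val_one, neg_mul, one_mul, zero_mul,
      add_zero, and_true]
    ring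
  rw [pow_succ' _ (n + 1), (hrow _).1, pow_succ' _ n, (hrow _).2]

/-- The invariant `s / 2 * a n ≤ a (n + 1)` propagates: for `p ≥ 0` it gives `p * (s * a n) ≤
2 * p * a (n + 1) ≤ s ^ 2 / 2 * a (n + 1)`, i.e. `s / 2 * a (n + 1) ≤ s * a (n + 1) - p * a n`. -/
lemma pos_and_half_mul_le_succ_of_linear_recurrence {a : ℕ → ℝ} {s p : ℝ} (hs : 0 < s)
    (hdisc : 4 * p ≤ s ^ 2) (h0 : 0 < a 0) (h1 : s / 2 * a 0 ≤ a 1)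
    (hrec : ∀ n, a (n + 2) = s * a (n + 1) - p * a n) :
    ∀ n, 0 < a n ∧ s / 2 * a n ≤ a (n + 1) := by
  intro n
  induction n with
  | zero => exact ⟨h0, h1⟩
  | succ n ih =>
    obtain ⟨hpos, hstep⟩ := ih
    have hpos' : 0 < a (n + 1) := lt_of_lt_of_le (by positivity) hstep
    refine ⟨hpos', ?_⟩
    rw [hrec]
    rcases le_or_gt 0 p with hp | hp
    · nlinarith [mul_le_mul_of_nonneg_left hstep hp]
    · nlinarith

lemma agdMat_pow_apply_zero_zero_pos {θ x : ℝ} (hθ : θ < 1) (hx : x ≤ θ ^ 2 / (2 - θ) ^ 2)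
    (n : ℕ) : 0 < (agdMat θ x ^ n) 0 0 := by
  have hθ2 : 0 < (2 - θ) ^ 2 := by nlinarith
  have hx' : x * (2 - θ) ^ 2 ≤ θ ^ 2 := (le_div_iff₀ hθ2).mp hx
  have hx1 : x < 1 := by nlinarith
  refine (pos_and_half_mul_le_succ_of_linear_recurrence (a := fun n ↦ (agdMat θ x ^ n) 0 0)
    (p := (1 - θ) * (1 - x))
    (by nlinarith) (by nlinarith) (by simp) ?_ (agdMat_pow_succ_succ_apply_zero_zero θ x) n).1
  simp only [agdMat, pow_zero, Matrix.one_apply_eq, mul_one, pow_one, Matrix.of_apply,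
    Matrix.cons_val', Matrix.cons_val_zero, Matrix.cons_val_fin_one, half_le_self_iff]
  nlinarith

lemma sq_sum_div_sum_mul_le_sum_sq {ι : Type*} (s : Finset ι) {a : ι → ℝ}
    (ha : ∀ i ∈ s, 0 ≤ a i) (y : ι → ℝ) :
    (∑ i ∈ s, a i / (∑ j ∈ s, a j) * y i) ^ 2 ≤ ∑ i ∈ s, y i ^ 2 := by
  have hw : ∀ i ∈ s, 0 ≤ a i / ∑ j ∈ s, a j := fun i hi ↦ div_nonneg (ha i hi) (sum_nonneg ha)
  have hw_sum : ∑ i ∈ s, a i / ∑ j ∈ s, a j ≤ 1 := by rw [← sum_div]; exact div_self_le_one _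
  calc (∑ i ∈ s, a i / (∑ j ∈ s, a j) * y i) ^ 2
      ≤ (∑ i ∈ s, (a i / ∑ j ∈ s, a j) ^ 2) * ∑ i ∈ s, y i ^ 2 := sum_mul_sq_le_sq_mul_sq _ _ _
    _ ≤ (∑ i ∈ s, a i / ∑ j ∈ s, a j) ^ 2 * ∑ i ∈ s, y i ^ 2 := by
        gcongr; exact sum_sq_le_sq_sum_of_nonneg hw
    _ ≤ 1 * ∑ i ∈ s, y i ^ 2 := by
        gcongr; exact pow_le_one₀ (sum_nonneg hw) hw_sum
    _ = ∑ i ∈ s, y i ^ 2 := one_mul _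

lemma sq_sum_agdMat_weight_mul_le {θ x : ℝ} (hθ : θ < 1) (hx : x ≤ θ ^ 2 / (2 - θ) ^ 2)
    (T : ℕ) (y : ℕ → ℝ) :
    (∑ τ ∈ range T, (agdMat θ x ^ (T - 1 - τ)) 0 0 /
        (∑ τ' ∈ range T, (agdMat θ x ^ τ') 0 0) * y τ) ^ 2 ≤ ∑ τ ∈ range T, y τ ^ 2 := by
  rw [← sum_range_reflect (fun τ' ↦ (agdMat θ x ^ τ') 0 0) T]
  exact sq_sum_div_sum_mul_le_sum_sq (range T) (a := fun τ ↦ (agdMat θ x ^ (T - 1 - τ)) 0 0)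
    (fun τ _ ↦ (agdMat_pow_apply_zero_zero_pos hθ hx _).le) y

lemma sum_range_sq_le_sq_of_le_div_sqrt {u : ℕ → ℝ} {r : ℝ} {T : ℕ} (hu0 : ∀ τ, 0 ≤ u τ)
    (hu : ∀ τ < T, u τ ≤ r / √T) : ∑ τ ∈ range T, u τ ^ 2 ≤ r ^ 2 := by
  rcases T.eq_zero_or_pos with rfl | hT
  · simp [sq_nonneg]
  have hT' : (0 : ℝ) < T := Nat.cast_pos.mpr hT
  calc ∑ τ ∈ range T, u τ ^ 2 ≤ ∑ _τ ∈ range T, (r / √T) ^ 2 :=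
        sum_le_sum fun τ hτ ↦ pow_le_pow_left₀ (hu0 τ) (hu τ (mem_range.mp hτ)) 2
    _ = r ^ 2 := by
        rw [sum_const, card_range, nsmul_eq_mul, div_pow, Real.sq_sqrt hT'.le]
        field_simp

theorem accumulated_error_flat_subspace_general {d : ℕ}
    (ℓ ε θ η χ c : ℝ) (T : ℕ)
    (hℓ : 0 < ℓ)
    (hθ' : θ ≤ 1 / 4)
    (hη : η = 1 / (4 * ℓ))
    (hχ : 1 ≤ χ) (hc : 1 ≤ c)
    (b : OrthonormalBasis (Fin d) ℝ (EuclideanSpace ℝ (Fin d)))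
    (lam : Fin d → ℝ)
    (e : ℕ → EuclideanSpace ℝ (Fin d))
    (he : ∀ τ, τ < T → ‖e τ‖ < ε / (χ * c * Real.sqrt (2 * T))) :
    ∑ j ∈ Finset.univ.filter
        (fun j => -ℓ ≤ lam j ∧ lam j ≤ θ ^ 2 / (η * (2 - θ) ^ 2)),
      (∑ τ ∈ Finset.range T,
        (agdMat θ (η * lam j) ^ (T - 1 - τ)) 0 0 /
          (∑ τ' ∈ Finset.range T, (agdMat θ (η * lam j) ^ τ') 0 0) * ⟪b j, e τ⟫) ^ 2
      ≤ ε ^ 2 := by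
  have hη0 : 0 < η := by rw [hη]; positivity
  have hflat : ∀ j ∈ univ.filter (fun j => -ℓ ≤ lam j ∧ lam j ≤ θ ^ 2 / (η * (2 - θ) ^ 2)),
      η * lam j ≤ θ ^ 2 / (2 - θ) ^ 2 := fun j hj ↦ by
    rw [← le_div_iff₀' hη0, div_div, mul_comm]; exact (mem_filter.mp hj).2.2
  have he' : ∀ τ < T, ‖e τ‖ ≤ ε / (χ * c * √2) / √T := fun τ hτ ↦ by
    rw [div_div, mul_assoc, ← Real.sqrt_mul zero_le_two]; exact (he τ hτ).le
  have hχc : 1 ≤ χ * c * √2 :=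
    one_le_mul_of_one_le_of_one_le (one_le_mul_of_one_le_of_one_le hχ hc) Real.one_lt_sqrt_two.le
  calc _ ≤ ∑ j ∈ univ.filter (fun j => -ℓ ≤ lam j ∧ lam j ≤ θ ^ 2 / (η * (2 - θ) ^ 2)),
          ∑ τ ∈ range T, ⟪b j, e τ⟫ ^ 2 :=
        sum_le_sum fun j hj ↦ sq_sum_agdMat_weight_mul_le (by linarith) (hflat j hj) T _
    _ ≤ ∑ j, ∑ τ ∈ range T, ⟪b j, e τ⟫ ^ 2 :=
        sum_le_sum_of_subset_of_nonneg (filter_subset _ _) fun _ _ _ ↦ by positivity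
    _ = ∑ τ ∈ range T, ‖e τ‖ ^ 2 := by
        rw [sum_comm]; simp only [b.sum_sq_inner_right]
    _ ≤ (ε / (χ * c * √2)) ^ 2 := sum_range_sq_le_sq_of_le_div_sqrt (fun _ ↦ norm_nonneg _) he'
    _ ≤ ε ^ 2 := by
        rw [div_pow]; exact div_le_self (sq_nonneg ε) (one_le_pow₀ hχc)

/-- (Accumulated gradient error in the flat/negative subspace `𝒮ᶜ`.)
With `a_τ^{(j)} = (1 0)·A_j^τ·(1 0)ᵀ` and `p_τ^{(j)} = a_{𝒯−1−τ}^{(j)}/∑_{τ'<𝒯} a_{τ'}^{(j)}`,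
if `max_τ ‖e_τ‖ < ε/(χc√(2𝒯))` then
`∑_{j ∈ 𝒮ᶜ} |∑_{τ<𝒯} p_τ^{(j)} e_τ^{(j)}|² ≤ ε²`. -/
theorem accumulated_error_flat_subspace {d : ℕ}
    (ℓ ϱ ε θ η χ c : ℝ) (T : ℕ)
    (hℓ : 0 < ℓ) (hϱ : 0 < ϱ) (hε : 0 < ε)
    (hθ : 0 < θ) (hθ' : θ ≤ 1 / 4)
    (hη : η = 1 / (4 * ℓ))
    (hχ : 1 ≤ χ) (hc : 1 ≤ c)
    (hT : (T : ℝ) = Real.sqrt (ℓ / Real.sqrt (ϱ * ε)) * χ * c)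
    (b : OrthonormalBasis (Fin d) ℝ (EuclideanSpace ℝ (Fin d)))
    (H : EuclideanSpace ℝ (Fin d) →L[ℝ] EuclideanSpace ℝ (Fin d))
    (lam : Fin d → ℝ)
    (hHb : ∀ j, H (b j) = lam j • b j)
    (hHnorm : ‖H‖ ≤ ℓ)
    (e : ℕ → EuclideanSpace ℝ (Fin d))
    (he : ∀ τ, τ < T → ‖e τ‖ < ε / (χ * c * Real.sqrt (2 * T))) :
    ∑ j ∈ Finset.univ.filter
        (fun j => -ℓ ≤ lam j ∧ lam j ≤ θ ^ 2 / (η * (2 - θ) ^ 2)),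
      (∑ τ ∈ Finset.range T,
        (agdMat θ (η * lam j) ^ (T - 1 - τ)) 0 0 /
          (∑ τ' ∈ Finset.range T, (agdMat θ (η * lam j) ^ τ') 0 0) * ⟪b j, e τ⟫) ^ 2
      ≤ ε ^ 2 :=
  accumulated_error_flat_subspace_general ℓ ε θ η χ c T hℓ hθ' hη hχ hc b lam e he
end

section
/- Let ℋ be a symmetric d×d real matrix with ‖ℋ‖ ≤ ℓ, eigenvalues λ_j and an orthonormal eigenbasis; let 𝒮 be the set of indices j with λ_j ∈ (θ²/(η(2−θ)²), ℓ]. Assume 0 < θ ≤ 1/4, η = 1/(4ℓ), and let 𝒯 = √κ·χ·c with κ = ℓ/√(ϱε), ℳ = (ε√κ/ℓ)·c^{−1}, and constants χ, c ≥ 1. For each j, set x = ηλ_j, let A_j be the 2×2 matrix [[(2−θ)(1−x), −(1−θ)(1−x)], [1, 0]] and define a_τ^{(j)} = (1 0)·A_j^τ·(1 0)ᵀ (with a_{−1}^{(j)} = 0). If the vectors e_0, ..., e_{𝒯−1} ∈ ℝ^d satisfy max_τ ‖e_τ‖ < ε/(c√𝒯), then for every t ≤ 𝒯, ∑_{j ∈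 𝒮} |η λ_j^{1/2} ∑_{τ=0}^{t−1} (a_τ^{(j)} − a_{τ−1}^{(j)}) e_{t−1−τ}^{(j)}|² < (1/3)·√(ϱε)·ℳ² = ε²/(3ℓc²), where e_τ^{(j)} denotes the component of e_τ along the j-th eigenvector of ℋ. -/
open scoped RealInnerProductSpace Classical

/-- `a_τ^{(j)} = (1 0)·A_j^τ·(1 0)ᵀ`, extended by `a_{−1} = 0` (here `aDiff τ = a_τ − a_{τ−1}`). -/
noncomputable def agdCoeffDiff (θ x : ℝ) (τ : ℕ) : ℝ :=
  (agdMat θ x ^ τ) 0 0 - if τ = 0 then 0 else (agdMat θ x ^ (τ - 1)) 0 0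

lemma agd_sq_sum_bound (θ x : ℝ) (hθ : 0 < θ) (hθ' : θ ≤ 1/4)
    (hx : 0 < x) (hx' : x ≤ 1/4) (t : ℕ) :
    x * ∑ τ ∈ Finset.range t, (agdCoeffDiff θ x τ)^2 ≤ 4/3 := by
  set p : ℝ := (2 - θ) * (1 - x) with hp
  set q : ℝ := (1 - θ) * (1 - x) with hq
  set a : ℕ → ℝ := fun n => (agdMat θ x ^ n) 0 0 with ha
  set bb : ℕ → ℝ := fun n => (agdMat θ x ^ n) 0 1 with hbb
  have ha0 : a 0 = 1 := by simp [ha]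
  have hb0 : bb 0 = 0 := by simp [hbb]
  have hstep : ∀ n, a (n+1) = p * a n + bb n ∧ bb (n+1) = -q * a n := by
    intro n
    constructor
    · simp [ha, hbb, pow_succ, Matrix.mul_apply, Fin.sum_univ_two, agdMat]
      rw [hp]; ring
    · simp [ha, hbb, pow_succ, Matrix.mul_apply, Fin.sum_univ_two, agdMat]
      rw [hq]; ring
  have harec : ∀ n, a (n+2) = p * a (n+1) - q * a n := by
    intro n
    have h1 := (hstep (n+1)).1
    have h2 := (hstep n).2
    rw [show n+2 = n+1+1 from rfl, h1, h2]; ring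
  set D : ℕ → ℝ := fun n => agdCoeffDiff θ x n with hD
  have hD0 : D 0 = 1 := by simp [hD, agdCoeffDiff]
  have hDs : ∀ n, D (n+1) = a (n+1) - a n := by
    intro n; simp [hD, agdCoeffDiff, ha]
  have hD1 : D 1 = p - 1 := by
    rw [hDs 0, (hstep 0).1, ha0, hb0]; ring
  have hrec : ∀ n, D (n+2) = p * D (n+1) - q * D n := by
    intro n
    cases n with
    | zero =>
      rw [show (0:ℕ)+2 = 1+1 from rfl, hDs 1, hDs 0, hD0, harec 0, (hstep 0).1, hb0, ha0]
      ring
    | succ m =>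
      have e1 := hDs (m+2)
      have e2 := hDs (m+1)
      have e3 := hDs m
      have e4 := harec (m+1)
      have e5 := harec m
      rw [show m+1+2 = m+2+1 from rfl]
      linear_combination e1 - p*e2 + q*e3 + e4 - e5
  have hpq : 1 + q - p = x := by rw [hp, hq]; ring
  have inv : ∀ n, x*((1-q)*(1+p+q))*(∑ τ ∈ Finset.range (n+1), (D τ)^2)
      + ((1+q)*q^2*(D n)^2 - 2*p*q*(D n)*(D (n+1)) + (1+q)*(D (n+1))^2) = 2*x := by
    intro n
    induction n with
    | zero =>
      rw [Finset.sum_range_one, hD0, hD1]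
      linear_combination (1 - q + (1-q)*(1+p+q))*hpq
    | succ m ih =>
      rw [Finset.sum_range_succ, hrec m]
      linear_combination ih - (D (m+1))^2*(1-q)*(1+p+q)*hpq
  -- positivity facts
  have hq0 : 0 < q := by rw [hq]; nlinarith
  have hp0 : 0 < p := by rw [hp]; nlinarith
  have hplb : 21/16 ≤ p := by rw [hp]; nlinarith
  have h1q : x ≤ 1 - q := by rw [hq]; nlinarith
  -- conclude
  rcases Nat.eq_zero_or_pos t with ht | ht
  · subst ht; simp; linarith
  obtain ⟨n, rfl⟩ := Nat.exists_eq_add_of_lt ht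
  rw [zero_add] at *
  have := inv n
  have hR : 0 ≤ (1+q)*q^2*(D n)^2 - 2*p*q*(D n)*(D (n+1)) + (1+q)*(D (n+1))^2 := by
    nlinarith [mul_nonneg hp0.le (sq_nonneg (q*(D n) - D (n+1))),
      mul_nonneg hx.le (sq_nonneg (q*(D n))), mul_nonneg hx.le (sq_nonneg (D (n+1))), hpq]
  have hS : 0 ≤ ∑ τ ∈ Finset.range (n+1), (D τ)^2 :=
    Finset.sum_nonneg fun _ _ => sq_nonneg _
  have hZx : x*(37/16) ≤ (1-q)*(1+p+q) := by nlinarith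
  nlinarith [mul_le_mul_of_nonneg_right hZx (mul_nonneg hx.le hS)]

/-- (Accumulated differenced gradient error in the strongly-convex
subspace `𝒮`.)  With `a_τ^{(j)} = (1 0)·A_j^τ·(1 0)ᵀ` (and `a_{−1}^{(j)} = 0`), `κ = ℓ/√(ϱε)`,
`ℳ = (ε√κ/ℓ)·c⁻¹`, if `max_τ ‖e_τ‖ < ε/(c√𝒯)` then for every `t ≤ 𝒯`,
`∑_{j ∈ 𝒮} |η λ_j^{1/2} ∑_{τ<t} (a_τ^{(j)} − a_{τ−1}^{(j)}) e_{t−1−τ}^{(j)}|²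
  < (1/3)√(ϱε)ℳ² = ε²/(3ℓc²)`. -/
theorem accumulated_error_convex_subspace_diff {d : ℕ}
    (ℓ ϱ ε θ η χ c κ ℳ : ℝ) (T : ℕ)
    (hℓ : 0 < ℓ) (hϱ : 0 < ϱ) (hε : 0 < ε)
    (hθ : 0 < θ) (hθ' : θ ≤ 1 / 4)
    (hη : η = 1 / (4 * ℓ))
    (hχ : 1 ≤ χ) (hc : 1 ≤ c)
    (hκ : κ = ℓ / Real.sqrt (ϱ * ε))
    (hT : (T : ℝ) = Real.sqrt κ * χ * c)
    (hM : ℳ = ε * Real.sqrt κ / ℓ * c⁻¹)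
    (b : OrthonormalBasis (Fin d) ℝ (EuclideanSpace ℝ (Fin d)))
    (H : EuclideanSpace ℝ (Fin d) →L[ℝ] EuclideanSpace ℝ (Fin d))
    (lam : Fin d → ℝ)
    (hHb : ∀ j, H (b j) = lam j • b j)
    (hHnorm : ‖H‖ ≤ ℓ)
    (e : ℕ → EuclideanSpace ℝ (Fin d))
    (he : ∀ τ, τ < T → ‖e τ‖ < ε / (c * Real.sqrt T)) :
    ∀ t, t ≤ T →
      ∑ j ∈ Finset.univ.filter
          (fun j => θ ^ 2 / (η * (2 - θ) ^ 2) < lam j ∧ lam j ≤ ℓ),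
        (η * Real.sqrt (lam j) *
          ∑ τ ∈ Finset.range t,
            agdCoeffDiff θ (η * lam j) τ * ⟪b j, e (t - 1 - τ)⟫) ^ 2
        < 1 / 3 * Real.sqrt (ϱ * ε) * ℳ ^ 2 := by
  intro t ht
  have hc0 : (0:ℝ) < c := lt_of_lt_of_le one_pos hc
  have hη0 : 0 < η := by rw [hη]; positivity
  have hs0 : 0 < Real.sqrt (ϱ * ε) := Real.sqrt_pos.2 (by positivity)
  have hκ0 : 0 ≤ κ := by rw [hκ]; positivity
  -- RHS value
  have hsne : Real.sqrt (ϱ * ε) ≠ 0 := ne_of_gt hs0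
  have hlne : ℓ ≠ 0 := ne_of_gt hℓ
  have hcne : c ≠ 0 := ne_of_gt hc0
  have hRHS : 1 / 3 * Real.sqrt (ϱ * ε) * ℳ ^ 2 = ε ^ 2 / (3 * ℓ * c ^ 2) := by
    have h1 : Real.sqrt κ ^ 2 = κ := Real.sq_sqrt hκ0
    rw [hM, mul_pow, div_pow, mul_pow, h1, inv_pow, hκ]
    field_simp
  rw [hRHS]
  rcases Nat.eq_zero_or_pos t with ht0 | ht1
  · subst ht0
    simp only [Finset.range_zero, Finset.sum_empty, mul_zero, ne_eq, OfNat.ofNat_ne_zero,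
      not_false_eq_true, zero_pow, Finset.sum_const_zero]
    positivity
  -- t ≥ 1
  have hT1 : 1 ≤ T := le_trans ht1 ht
  have hT0 : (0:ℝ) < (T:ℝ) := by exact_mod_cast hT1
  -- Parseval bound per τ
  have hpars : ∀ v : EuclideanSpace ℝ (Fin d),
      ∑ j ∈ Finset.univ.filter
          (fun j => θ ^ 2 / (η * (2 - θ) ^ 2) < lam j ∧ lam j ≤ ℓ),
        (⟪b j, v⟫ : ℝ) ^ 2 ≤ ‖v‖ ^ 2 := by
    intro v
    have huniv : ∑ j, (⟪b j, v⟫ : ℝ) ^ 2 = ‖v‖ ^ 2 := by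
      have h := b.sum_inner_mul_inner v v
      rw [real_inner_self_eq_norm_sq] at h
      rw [← h]
      refine Finset.sum_congr rfl fun j _ => ?_
      rw [sq, real_inner_comm]
    rw [← huniv]
    exact Finset.sum_le_sum_of_subset_of_nonneg (Finset.filter_subset _ _)
      (fun j _ _ => sq_nonneg _)
  -- per-j bound
  have hperj : ∀ j ∈ Finset.univ.filter
          (fun j => θ ^ 2 / (η * (2 - θ) ^ 2) < lam j ∧ lam j ≤ ℓ),
      (η * Real.sqrt (lam j) *
          ∑ τ ∈ Finset.range t,
            agdCoeffDiff θ (η * lam j) τ * ⟪b j, e (t - 1 - τ)⟫) ^ 2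
        ≤ η * (4/3) * ∑ τ ∈ Finset.range t, (⟪b j, e (t - 1 - τ)⟫ : ℝ) ^ 2 := by
    intro j hj
    rw [Finset.mem_filter] at hj
    obtain ⟨-, hj1, hj2⟩ := hj
    have h2θ : (0:ℝ) < 2 - θ := by linarith
    have hnum : 0 < θ ^ 2 / (η * (2 - θ) ^ 2) := by positivity
    have hlam0 : 0 < lam j := lt_trans hnum hj1
    have hx : 0 < η * lam j := mul_pos hη0 hlam0
    have hx' : η * lam j ≤ 1/4 := by
      rw [hη]
      rw [div_mul_eq_mul_div, one_mul, div_le_div_iff₀ (by linarith) (by norm_num)]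
      linarith
    have hCS := Finset.sum_mul_sq_le_sq_mul_sq (Finset.range t)
      (fun τ => agdCoeffDiff θ (η * lam j) τ)
      (fun τ => (⟪b j, e (t - 1 - τ)⟫ : ℝ))
    have hkey := agd_sq_sum_bound θ (η * lam j) hθ hθ' hx hx' t
    have hw2 : 0 ≤ ∑ τ ∈ Finset.range t, (⟪b j, e (t - 1 - τ)⟫ : ℝ) ^ 2 :=
      Finset.sum_nonneg fun _ _ => sq_nonneg _
    have h1 : (η * Real.sqrt (lam j) *
          ∑ τ ∈ Finset.range t,
            agdCoeffDiff θ (η * lam j) τ * ⟪b j, e (t - 1 - τ)⟫) ^ 2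
        = η * ((η * lam j) *
          (∑ τ ∈ Finset.range t,
            agdCoeffDiff θ (η * lam j) τ * ⟪b j, e (t - 1 - τ)⟫) ^ 2) := by
      rw [mul_pow, mul_pow, Real.sq_sqrt hlam0.le]
      ring
    rw [h1]
    calc η * ((η * lam j) *
          (∑ τ ∈ Finset.range t,
            agdCoeffDiff θ (η * lam j) τ * ⟪b j, e (t - 1 - τ)⟫) ^ 2)
        ≤ η * ((η * lam j) *
          ((∑ τ ∈ Finset.range t, (agdCoeffDiff θ (η * lam j) τ) ^ 2) *
           ∑ τ ∈ Finset.range t, (⟪b j, e (t - 1 - τ)⟫ : ℝ) ^ 2)) := by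
          apply mul_le_mul_of_nonneg_left _ hη0.le
          exact mul_le_mul_of_nonneg_left hCS hx.le
      _ = η * (((η * lam j) *
          ∑ τ ∈ Finset.range t, (agdCoeffDiff θ (η * lam j) τ) ^ 2) *
           ∑ τ ∈ Finset.range t, (⟪b j, e (t - 1 - τ)⟫ : ℝ) ^ 2) := by ring
      _ ≤ η * ((4/3) *
           ∑ τ ∈ Finset.range t, (⟪b j, e (t - 1 - τ)⟫ : ℝ) ^ 2) := by
          apply mul_le_mul_of_nonneg_left _ hη0.le
          exact mul_le_mul_of_nonneg_right hkey hw2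
      _ = η * (4/3) * ∑ τ ∈ Finset.range t, (⟪b j, e (t - 1 - τ)⟫ : ℝ) ^ 2 := by ring
  -- assemble
  have hsum1 : ∑ j ∈ Finset.univ.filter
          (fun j => θ ^ 2 / (η * (2 - θ) ^ 2) < lam j ∧ lam j ≤ ℓ),
        (η * Real.sqrt (lam j) *
          ∑ τ ∈ Finset.range t,
            agdCoeffDiff θ (η * lam j) τ * ⟪b j, e (t - 1 - τ)⟫) ^ 2
      ≤ η * (4/3) * ∑ τ ∈ Finset.range t, ‖e (t - 1 - τ)‖ ^ 2 := by
    calc _ ≤ ∑ j ∈ Finset.univ.filter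
          (fun j => θ ^ 2 / (η * (2 - θ) ^ 2) < lam j ∧ lam j ≤ ℓ),
          η * (4/3) * ∑ τ ∈ Finset.range t, (⟪b j, e (t - 1 - τ)⟫ : ℝ) ^ 2 :=
        Finset.sum_le_sum hperj
      _ = η * (4/3) * ∑ j ∈ Finset.univ.filter
          (fun j => θ ^ 2 / (η * (2 - θ) ^ 2) < lam j ∧ lam j ≤ ℓ),
          ∑ τ ∈ Finset.range t, (⟪b j, e (t - 1 - τ)⟫ : ℝ) ^ 2 := by
        rw [Finset.mul_sum]
      _ = η * (4/3) * ∑ τ ∈ Finset.range t, ∑ j ∈ Finset.univ.filter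
          (fun j => θ ^ 2 / (η * (2 - θ) ^ 2) < lam j ∧ lam j ≤ ℓ),
          (⟪b j, e (t - 1 - τ)⟫ : ℝ) ^ 2 := by
        rw [Finset.sum_comm]
      _ ≤ η * (4/3) * ∑ τ ∈ Finset.range t, ‖e (t - 1 - τ)‖ ^ 2 := by
        apply mul_le_mul_of_nonneg_left _ (by positivity)
        exact Finset.sum_le_sum fun τ _ => hpars _
  -- strict bound on error energy
  have hbnd : ∑ τ ∈ Finset.range t, ‖e (t - 1 - τ)‖ ^ 2 < ε ^ 2 / c ^ 2 := by
    have hsq : (ε / (c * Real.sqrt T)) ^ 2 = ε ^ 2 / (c ^ 2 * T) := by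
      rw [div_pow, mul_pow, Real.sq_sqrt hT0.le]
    have h1 : ∑ τ ∈ Finset.range t, ‖e (t - 1 - τ)‖ ^ 2
        < ∑ _τ ∈ Finset.range t, (ε / (c * Real.sqrt T)) ^ 2 := by
      apply Finset.sum_lt_sum_of_nonempty (Finset.nonempty_range_iff.2 (by omega))
      intro τ hτ
      have hk : t - 1 - τ < T := by omega
      exact pow_lt_pow_left₀ (he _ hk) (norm_nonneg _) two_ne_zero
    have h2 : ∑ _τ ∈ Finset.range t, (ε / (c * Real.sqrt T)) ^ 2
        = (t : ℝ) * (ε ^ 2 / (c ^ 2 * T)) := by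
      rw [Finset.sum_const, Finset.card_range, nsmul_eq_mul, hsq]
    have h3 : (t : ℝ) * (ε ^ 2 / (c ^ 2 * T)) ≤ (T : ℝ) * (ε ^ 2 / (c ^ 2 * T)) := by
      apply mul_le_mul_of_nonneg_right _ (by positivity)
      exact_mod_cast ht
    have h4 : (T : ℝ) * (ε ^ 2 / (c ^ 2 * T)) = ε ^ 2 / c ^ 2 := by
      field_simp
    calc ∑ τ ∈ Finset.range t, ‖e (t - 1 - τ)‖ ^ 2
        < ∑ _τ ∈ Finset.range t, (ε / (c * Real.sqrt T)) ^ 2 := h1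
      _ = (t : ℝ) * (ε ^ 2 / (c ^ 2 * T)) := h2
      _ ≤ (T : ℝ) * (ε ^ 2 / (c ^ 2 * T)) := h3
      _ = ε ^ 2 / c ^ 2 := h4
  have hfin : η * (4/3) * ∑ τ ∈ Finset.range t, ‖e (t - 1 - τ)‖ ^ 2
      < ε ^ 2 / (3 * ℓ * c ^ 2) := by
    have := mul_lt_mul_of_pos_left hbnd (show (0:ℝ) < η * (4/3) by positivity)
    calc η * (4/3) * ∑ τ ∈ Finset.range t, ‖e (t - 1 - τ)‖ ^ 2
        < η * (4/3) * (ε ^ 2 / c ^ 2) := this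
      _ = ε ^ 2 / (3 * ℓ * c ^ 2) := by rw [hη]; field_simp
  exact lt_of_le_of_lt hsum1 hfin
end
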